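/- Simulation preorder reduces to simulation equivalence: given processes s and t in a transition system, extend the system with fresh states s', t' and fresh action a with transitions s' →a s, s' →a t, and t' →a t (and no others from s', t'). Then s ⊑ t if and only if s' and t' are simulation equivalent. -/
import Mathlib


/-- A bisimulation on a labelled transition system `tr`. -/
def IsBisim {S Act : Type*} (tr : S → Act → S → Prop) (R : S → S → Prop) : Prop :=
  ∀ s t, R s t →
    (∀ a s', tr s a s' → ∃ t', tr t a t' ∧ R s' t') ∧
    (∀ a t', tr t a t' → ∃ s', tr s a s' ∧ R s' t')

/-- Bisimilarity: union of all bisimulations. -/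
def Bisim {S Act : Type*} (tr : S → Act → S → Prop) (s t : S) : Prop :=
  ∃ R, IsBisim tr R ∧ R s t

/-- A simulation. -/
def IsSim {S Act : Type*} (tr : S → Act → S → Prop) (R : S → S → Prop) : Prop :=
  ∀ s t, R s t → ∀ a s', tr s a s' → ∃ t', tr t a t' ∧ R s' t'

/-- Simulation preorder. -/
def SimPre {S Act : Type*} (tr : S → Act → S → Prop) (s t : S) : Prop :=
  ∃ R, IsSim tr R ∧ R s t

theorem simPre_reduces_to_simEquiv {S Act : Type*} (tr : S → Act → S → Prop) (s t : S) :
    -- the extended system: `Sum.inr false` is the fresh state `s'`, `Sum.inr true` is `t'`,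
    -- and `none` is the fresh action `a`
    let tr' : S ⊕ Bool → Option Act → S ⊕ Bool → Prop := fun x b y =>
      match x, b, y with
      | Sum.inl x, some a, Sum.inl y => tr x a y
      | Sum.inr false, none, Sum.inl y => y = s ∨ y = t
      | Sum.inr true, none, Sum.inl y => y = t
      | _, _, _ => False
    (SimPre tr s t ↔
      (SimPre tr' (Sum.inr false) (Sum.inr true) ∧ SimPre tr' (Sum.inr true) (Sum.inr false))) := by

  intro tr'
  constructor
  · rintro ⟨R, hR, hst⟩
    constructor
    · -- s' ⊑ t'
      refine ⟨fun x y => (x = Sum.inr false ∧ y = Sum.inr true) ∨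
        (∃ u v, x = Sum.inl u ∧ y = Sum.inl v ∧ (R u v ∨ u = v)), ?_, Or.inl ⟨rfl, rfl⟩⟩
      rintro x y (⟨rfl, rfl⟩ | ⟨u, v, rfl, rfl, huv⟩) a x' hx
      · match a, x', hx with
        | none, Sum.inl y, hy =>
          exact ⟨Sum.inl t, rfl, Or.inr ⟨y, t, rfl, rfl, by
            rcases hy with rfl | rfl
            · exact Or.inl hst
            · exact Or.inr rfl⟩⟩
      · match a, x', hx with
        | some a, Sum.inl x', hx =>
          rcases huv with huv | rfl
          · obtain ⟨v', hv', hRv⟩ := hR u v huv a x' hx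
            exact ⟨Sum.inl v', hv', Or.inr ⟨x', v', rfl, rfl, Or.inl hRv⟩⟩
          · exact ⟨Sum.inl x', hx, Or.inr ⟨x', x', rfl, rfl, Or.inr rfl⟩⟩
    · -- t' ⊑ s'
      refine ⟨fun x y => (x = Sum.inr true ∧ y = Sum.inr false) ∨
        (∃ u, x = Sum.inl u ∧ y = Sum.inl u), ?_, Or.inl ⟨rfl, rfl⟩⟩
      rintro x y (⟨rfl, rfl⟩ | ⟨u, rfl, rfl⟩) a x' hx
      · rcases a with _ | a <;> rcases x' with x' | b <;> try exact hx.elim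
        cases hx
        exact ⟨Sum.inl t, Or.inr rfl, Or.inr ⟨t, rfl, rfl⟩⟩
      · match a, x', hx with
        | some a, Sum.inl x', hx =>
          exact ⟨Sum.inl x', hx, Or.inr ⟨x', rfl, rfl⟩⟩
  · rintro ⟨⟨R, hR, hst⟩, -⟩
    -- s' → s must be matched by t' → t
    obtain ⟨y, hy, hRy⟩ := hR _ _ hst none (Sum.inl s) (Or.inl rfl)
    rcases y with y | b
    swap
    · exact (hy : False).elim
    have hy' : y = t := hy
    subst hy'
    refine ⟨fun u v => R (Sum.inl u) (Sum.inl v), ?_, hRy⟩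
    intro u v huv a u' hu
    obtain ⟨v', hv', hRv⟩ := hR _ _ huv (some a) (Sum.inl u') hu
    rcases v' with v' | b
    · exact ⟨v', hv', hRv⟩
    · exact (hv' : False).elim
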